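/- arXiv:1405.1772 — 3 statements merged into one kernel-verified Lean document; each statement's English description precedes it below -/
import Mathlib

section
/- Let p be a prime and let Γ be a p-divisible linearly ordered abelian group (for every x ∈ Γ there exists y ∈ Γ with p·y = x). Then for every δ ∈ Γ and every finite list of elements γ_0, γ_1, …, γ_d ∈ Γ there exists a unique μ ∈ Γ such that δ = min_{0 ≤ i ≤ d} (p^i·μ + γ_i). -/
/-!
The map `μ ↦ min_i (p^i • μ + γ_i)` is a minimum of finitely many order automorphisms of `Γ`
(each `μ ↦ p^i • μ` is strictly monotone since `Γ` is torsion-free, and surjective since `Γ` is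
`p`-divisible). Such a minimum is strictly monotone, hence injective, and it is surjective: if
`f_i μ_i = δ` for each `i`, then `μ = max_i μ_i` satisfies `f_i μ ≥ δ` for all `i`, with equality
at an index where the maximum is attained.
-/

open Function

namespace Finset

variable {ι α β : Type*} [LinearOrder α] [LinearOrder β] {s : Finset ι} (hs : s.Nonempty)
  {f : ι → α → β}

lemma strictMono_inf' (hf : ∀ i ∈ s, StrictMono (f i)) :
    StrictMono fun x => s.inf' hs fun i => f i x := by
  intro a b hab
  obtain ⟨j, hj, hb⟩ := s.exists_mem_eq_inf' hs fun i => f i b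
  dsimp only
  rw [hb]
  exact (inf'_le _ hj).trans_lt (hf j hj hab)

lemma surjective_inf' (hmono : ∀ i, Monotone (f i)) (hsurj : ∀ i, Surjective (f i)) :
    Surjective fun x => s.inf' hs fun i => f i x := by
  intro b
  choose a ha using fun i => hsurj i b
  obtain ⟨j, hj, hja⟩ := s.exists_mem_eq_sup' hs a
  refine ⟨s.sup' hs a, le_antisymm ?_ ?_⟩
  · exact (inf'_le _ hj).trans_eq (by rw [hja, ha])
  · exact le_inf' _ _ fun i hi => (ha i).ge.trans (hmono i (le_sup' a hi))

lemma bijective_inf' (hmono : ∀ i, StrictMono (f i)) (hsurj : ∀ i, Surjective (f i)) :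
    Bijective fun x => s.inf' hs fun i => f i x :=
  ⟨(strictMono_inf' hs fun i _ => hmono i).injective,
    surjective_inf' hs (fun i => (hmono i).monotone) hsurj⟩

end Finset

/-- Let `p` be a prime and `Γ` a `p`-divisible linearly ordered abelian
group. Then for every `δ ∈ Γ` and every finite list `γ_0, …, γ_d ∈ Γ` there is a unique
`μ ∈ Γ` with `δ = min_{0 ≤ i ≤ d} (p^i • μ + γ_i)`. -/
theorem stmt_0 (p : ℕ) (hp : p.Prime) (Γ : Type*) [AddCommGroup Γ] [LinearOrder Γ] [IsOrderedAddMonoid Γ]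
    (hdiv : ∀ x : Γ, ∃ y : Γ, p • y = x)
    (d : ℕ) (γ : Fin (d + 1) → Γ) (δ : Γ) :
    ∃! μ : Γ, δ = Finset.univ.inf' Finset.univ_nonempty
      (fun i : Fin (d + 1) => p ^ (i : ℕ) • μ + γ i) := by
  have hpow_surj (n : ℕ) : Surjective (p ^ n • · : Γ → Γ) := by
    simpa only [smul_iterate] using Surjective.iterate hdiv n
  have hpow_strictMono (n : ℕ) : StrictMono (p ^ n • · : Γ → Γ) :=
    nsmul_right_strictMono (pow_ne_zero n hp.ne_zero)
  have hbij := Finset.bijective_inf' Finset.univ_nonempty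
    (f := fun (i : Fin (d + 1)) μ => p ^ (i : ℕ) • μ + γ i)
    (fun i => (add_left_strictMono (a := γ i)).comp (hpow_strictMono i))
    (fun i => (add_right_surjective (γ i)).comp (hpow_surj i))
  exact (existsUnique_congr fun _ => eq_comm).1 (hbij.existsUnique δ)
end

section
/- Let K be a separably closed field of characteristic p > 0, let d ≥ 1 and let a_0, a_1, …, a_d ∈ K with a_d ≠ 0. Then there exist f_1, …, f_d ∈ K such that for every x ∈ K one has ∑_{i=0}^{d} a_i·x^{p^i} = a_d · (g_d ∘ g_{d−1} ∘ ⋯ ∘ g_1)(x), where g_j : K → K is the map g_j(y) = y^p − f_j·y. -/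
/-- Iterated composition of the maps `y ↦ y^p - f·y`: for a list `[f₁, …, f_d]`,
`iterLin p [f₁, …, f_d] x = (g_d ∘ ⋯ ∘ g_1) x` where `g_j y = y^p - f_j·y`. -/
def iterLin {K : Type*} [Field K] (p : ℕ) : List K → K → K
  | [] => id
  | f :: fs => fun x => iterLin p fs (x ^ p - f * x)

/-!
The additive polynomial `P = ∑ aᵢ X^{pⁱ}` with `a₀ ≠ 0` has constant derivative `a₀`, so it is
separable and `P = X · S` where `S` has a root `α`, nonzero because `S(0) = P'(0) = a₀`.
For `f = α^{p-1}` the map `y ↦ y^p - f y` kills `α`; dividing `P` on the right by it, using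
additivity of Frobenius, leaves a linear remainder `c x` that also vanishes at `α`, so `c = 0`.
The quotient is additive of one degree less with the same leading coefficient, and we iterate.
When `a₀ = 0` one divides by `y ↦ y^p` instead.
-/
open Polynomial Finset

namespace AdditivePolynomial

variable {K : Type*} [Field K] {p : ℕ}

variable (p) in
noncomputable def toPoly (n : ℕ) (a : ℕ → K) : K[X] :=
  ∑ i ∈ range (n + 1), C (a i) * X ^ p ^ i

theorem eval_toPoly (n : ℕ) (a : ℕ → K) (x : K) :
    (toPoly p n a).eval x = ∑ i ∈ range (n + 1), a i * x ^ p ^ i := by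
  simp [toPoly, eval_finsetSum]

theorem coeff_toPoly_zero (hp : p ≠ 0) (n : ℕ) (a : ℕ → K) :
    (toPoly p n a).coeff 0 = 0 := by
  simp [toPoly, @eq_comm ℕ 0, hp]

theorem coeff_toPoly_pow (hp : 2 ≤ p) (n : ℕ) (a : ℕ → K) :
    (toPoly p n a).coeff (p ^ n) = a n := by
  simp [toPoly, (Nat.pow_right_injective hp).eq_iff]

theorem derivative_toPoly [CharP K p] (n : ℕ) (a : ℕ → K) :
    derivative (toPoly p n a) = C (a 0) := by
  rw [toPoly, derivative_sum, Finset.sum_eq_single_of_mem 0 (by simp)]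
  · simp
  · intro i _ hi
    rw [derivative_C_mul_X_pow]
    simp [hi]

theorem separable_toPoly [CharP K p] (n : ℕ) {a : ℕ → K} (ha : a 0 ≠ 0) :
    (toPoly p n a).Separable := by
  rw [separable_def, derivative_toPoly]
  exact ⟨0, C (a 0)⁻¹, by rw [zero_mul, zero_add, ← C_mul, inv_mul_cancel₀ ha, C_1]⟩

theorem exists_ne_zero_sum_eq_zero [IsSepClosed K] [CharP K p] (hp : p.Prime) {n : ℕ}
    (hn : 1 ≤ n) {a : ℕ → K} (ha₀ : a 0 ≠ 0) (han : a n ≠ 0) :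
    ∃ α ≠ 0, ∑ i ∈ range (n + 1), a i * α ^ p ^ i = 0 := by
  obtain ⟨S, hS⟩ := X_dvd_iff.2 (coeff_toPoly_zero hp.ne_zero n a)
  have hS₀ : S.eval 0 = a 0 := by
    simpa [derivative_toPoly, derivative_mul] using (congrArg (eval 0 ∘ derivative) hS).symm
  have hdeg : S.degree ≠ 0 := by
    intro h
    rw [eq_C_of_degree_eq_zero h] at hS
    have hle : p ^ n ≤ (toPoly p n a).natDegree :=
      le_natDegree_of_ne_zero (by rwa [coeff_toPoly_pow hp.two_le])
    have hlt : 1 < p ^ n := Nat.one_lt_pow (by omega) hp.one_lt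
    have := natDegree_mul_le (p := (X : K[X])) (q := C (S.coeff 0))
    simp only [natDegree_X, natDegree_C, add_zero, ← hS] at this
    omega
  obtain ⟨α, hα⟩ := IsSepClosed.exists_root S hdeg
    ((separable_toPoly n ha₀).of_dvd (Dvd.intro_left _ hS.symm))
  refine ⟨α, ?_, ?_⟩
  · rintro rfl
    exact ha₀ (hS₀ ▸ hα)
  · rw [← eval_toPoly, hS, eval_mul, hα.eq_zero, mul_zero]

theorem exists_sum_eq_sum_sub_mul_pow_add [Fact p.Prime] [CharP K p] (f : K) (n : ℕ)
    (a : ℕ → K) :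
    ∃ b : ℕ → K, b n = a (n + 1) ∧ ∀ x : K,
      ∑ i ∈ range (n + 2), a i * x ^ p ^ i
        = ∑ j ∈ range (n + 1), b j * (x ^ p - f * x) ^ p ^ j + (a 0 + b 0 * f) * x := by
  induction n generalizing a with
  | zero => exact ⟨fun _ => a 1, rfl, fun x => by simp [sum_range_succ]; ring⟩
  | succ n ih =>
    obtain ⟨b, hbn, hb⟩ :=
      ih (Function.update a (n + 1) (a (n + 1) + a (n + 2) * f ^ p ^ (n + 1)))
    refine ⟨Function.update b (n + 1) (a (n + 2)), by simp, fun x => ?_⟩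
    have hfrob : x ^ p ^ (n + 2)
        = (x ^ p - f * x) ^ p ^ (n + 1) + f ^ p ^ (n + 1) * x ^ p ^ (n + 1) := by
      rw [sub_pow_char_pow, mul_pow, ← pow_mul, ← pow_succ']
      ring
    have hlow : ∀ (c : ℕ → K) (v : K) (y : K) (e : ℕ → ℕ),
        ∑ i ∈ range (n + 1), Function.update c (n + 1) v i * y ^ e i
          = ∑ i ∈ range (n + 1), c i * y ^ e i :=
      fun c v y e => sum_congr rfl fun i hi => by
        rw [Function.update_of_ne (by simp at hi; omega)]
    have := hb x
    rw [sum_range_succ, hlow] at this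
    rw [sum_range_succ, sum_range_succ, sum_range_succ (n := n + 1), hlow]
    simp only [Function.update_self, Function.update_of_ne (Nat.succ_ne_zero n).symm] at this ⊢
    linear_combination this + a (n + 2) * hfrob

theorem exists_sum_eq_sum_sub_mul_pow [IsSepClosed K] [CharP K p] (hp : p.Prime) {n : ℕ}
    {a : ℕ → K} (ha : a (n + 1) ≠ 0) :
    ∃ f : K, ∃ b : ℕ → K, b n = a (n + 1) ∧ ∀ x : K,
      ∑ i ∈ range (n + 2), a i * x ^ p ^ i
        = ∑ j ∈ range (n + 1), b j * (x ^ p - f * x) ^ p ^ j := by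
  have := Fact.mk hp
  by_cases ha₀ : a 0 = 0
  · obtain ⟨b, hbn, hb⟩ := exists_sum_eq_sum_sub_mul_pow_add 0 n a
    exact ⟨0, b, hbn, fun x => by simpa [ha₀] using hb x⟩
  obtain ⟨α, hα₀, hα⟩ := exists_ne_zero_sum_eq_zero hp (n := n + 1) (by omega) ha₀ ha
  obtain ⟨b, hbn, hb⟩ := exists_sum_eq_sum_sub_mul_pow_add (α ^ (p - 1)) n a
  have hgα : α ^ p - α ^ (p - 1) * α = 0 := by
    rw [← pow_succ, Nat.sub_add_cancel hp.one_le, sub_self]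
  have hc : a 0 + b 0 * α ^ (p - 1) = 0 := by
    have := hb α
    simp only [hα, hgα, zero_pow (pow_ne_zero _ hp.ne_zero), mul_zero, sum_const_zero,
      zero_add] at this
    exact (mul_eq_zero.1 this.symm).resolve_right hα₀
  exact ⟨α ^ (p - 1), b, hbn, fun x => by rw [hb x, hc, zero_mul, add_zero]⟩

theorem exists_eq_mul_iterLin [IsSepClosed K] [CharP K p] (hp : p.Prime) (n : ℕ) (a : ℕ → K)
    (ha : a n ≠ 0) :
    ∃ L : List K, L.length = n ∧
      ∀ x : K, ∑ i ∈ range (n + 1), a i * x ^ p ^ i = a n * iterLin p L x := by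
  induction n generalizing a with
  | zero => exact ⟨[], rfl, by simp [iterLin]⟩
  | succ n ih =>
    obtain ⟨f, b, hbn, hb⟩ := exists_sum_eq_sum_sub_mul_pow hp ha
    obtain ⟨L, hL, hLb⟩ := ih b (hbn ▸ ha)
    exact ⟨f :: L, by simp [hL], fun x => by rw [hb, hLb, hbn]; rfl⟩

end AdditivePolynomial

theorem stmt_3_general (p : ℕ) (hp : p.Prime) (K : Type*) [Field K] [CharP K p] [IsSepClosed K]
    (d : ℕ) (a : ℕ → K) (had : a d ≠ 0) :
    ∃ L : List K, L.length = d ∧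
      ∀ x : K, ∑ i ∈ Finset.range (d + 1), a i * x ^ (p ^ i) = a d * iterLin p L x :=
  AdditivePolynomial.exists_eq_mul_iterLin hp d a had

/-- Let `K` be a separably closed field of characteristic `p > 0`,
`d ≥ 1` and `a_0, …, a_d ∈ K` with `a_d ≠ 0`. Then there exist `f_1, …, f_d ∈ K` such
that `∑_{i=0}^d a_i·x^{p^i} = a_d · (g_d ∘ ⋯ ∘ g_1)(x)` for all `x`, where
`g_j(y) = y^p − f_j·y`. -/
theorem stmt_3 (p : ℕ) (hp : p.Prime) (K : Type*) [Field K] [CharP K p] [IsSepClosed K]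
    (d : ℕ) (hd : 1 ≤ d) (a : ℕ → K) (had : a d ≠ 0) :
    ∃ L : List K, L.length = d ∧
      ∀ x : K, ∑ i ∈ Finset.range (d + 1), a i * x ^ (p ^ i) = a d * iterLin p L x :=
  stmt_3_general p hp K d a had
end

section
/- Let (K, v) be a separably closed valued field of characteristic p > 0 with valuation ring O. Let d ≥ 1 and let a_0, …, a_d ∈ O with a_d ≠ 0 and with at least one a_i a unit of O (v(a_i) = 0). Then there exist elements c_1, e_1, …, c_d, e_d ∈ O with min(v(c_j), v(e_j)) = 0 for each j, such that for every x ∈ K one has ∑_{i=0}^{d} a_i·x^{p^i} = (L_d ∘ L_{d−1} ∘ ⋯ ∘ L_1)(x), where L_j : K → K is the map L_j(y) = c_j·y^p − e_j·y. -/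
/-- A valuation on a field `K` with values in the linearly ordered abelian group `Γ`
(together with `∞ = ⊤`), surjective onto `Γ`, i.e. `Γ = v(K^×)`. -/
structure ValuedFieldAux (K : Type*) [Field K] (Γ : Type*)
    [AddCommGroup Γ] [LinearOrder Γ] [IsOrderedAddMonoid Γ] where
  v : K → WithTop Γ
  v_eq_top_iff : ∀ x : K, v x = ⊤ ↔ x = 0
  v_mul : ∀ x y : K, v (x * y) = v x + v y
  v_add : ∀ x y : K, min (v x) (v y) ≤ v (x + y)
  v_surj : ∀ γ : Γ, ∃ x : K, v x = (γ : WithTop Γ)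

/-- Iterated composition of the maps `y ↦ c·y^p - e·y`: for a list
`[(c₁,e₁), …, (c_d,e_d)]`, `iterLin2 p L x = (L_d ∘ ⋯ ∘ L_1) x` where
`L_j y = c_j·y^p - e_j·y`. -/
def iterLin2 {K : Type*} [Field K] (p : ℕ) : List (K × K) → K → K
  | [] => id
  | ce :: rest => fun x => iterLin2 p rest (ce.1 * x ^ p - ce.2 * x)

/-!
Over a separably closed field an additive polynomial `∑ aᵢ x^{pⁱ}` with `a₀ ≠ 0` is separable
(its derivative is `a₀`), so it has a nonzero root `α`; right division by `x^p - α^{p-1} x`,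
whose roots are `𝔽_p α`, then leaves no remainder. Peeling off such factors (or `x^p` when
`a₀ = 0`) writes the polynomial as a composition of `d` maps `y ↦ c y^p - e y`. Rescaling the
factors one after the other makes each satisfy `min (v c) (v e) = 0`, at the price of a scalar
`t` in front of the composition. By a Gauss-lemma argument, a composition of such factors has
integral coefficients one of which is a unit; comparing with the `aᵢ` forces `v t = 0`, so `t`
can be absorbed into the last factor.
-/

namespace ValuedFieldAux

variable {K : Type*} [Field K] {Γ : Type*} [AddCommGroup Γ] [LinearOrder Γ] [IsOrderedAddMonoid Γ]

theorem v_one (vf : ValuedFieldAux K Γ) : vf.v 1 = 0 := by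
  obtain ⟨g, hg⟩ := WithTop.ne_top_iff_exists.1 ((vf.v_eq_top_iff 1).not.2 one_ne_zero)
  have h := vf.v_mul 1 1
  rw [one_mul, ← hg, ← WithTop.coe_add, WithTop.coe_eq_coe, left_eq_add] at h
  rw [← hg, h, WithTop.coe_zero]

def toAddValuation (vf : ValuedFieldAux K Γ) : AddValuation K (WithTop Γ) :=
  AddValuation.of vf.v ((vf.v_eq_top_iff 0).2 rfl) vf.v_one vf.v_add vf.v_mul

end ValuedFieldAux

open Polynomial in
theorem IsSepClosed.infinite (K : Type*) [Field K] [IsSepClosed K] : Infinite K := by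
  refine Infinite.of_not_fintype fun _ => ?_
  let f : K[X] := X ^ (Fintype.card K + 1) - C 1
  have hsep : f.Separable := separable_X_pow_sub_C 1 (by simp) one_ne_zero
  have hcard : Fintype.card (f.rootSet K) = Fintype.card K + 1 := by
    rw [card_rootSet_eq_natDegree hsep (IsSepClosed.splits_codomain _ hsep), natDegree_X_pow_sub_C]
  have := hcard ▸ Fintype.card_subtype_le (· ∈ f.rootSet K)
  omega

section AdditivePolynomial

open Polynomial

variable {K : Type*} [Field K] (p : ℕ)

def addPolyEval (a : ℕ → K) (n : ℕ) (x : K) : K :=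
  ∑ i ∈ Finset.range (n + 1), a i * x ^ p ^ i

noncomputable def addPoly (a : ℕ → K) (n : ℕ) : K[X] :=
  ∑ i ∈ Finset.range (n + 1), C (a i) * X ^ p ^ i

variable {p}

theorem addPolyEval_zero (hp : p ≠ 0) (a : ℕ → K) (n : ℕ) : addPolyEval p a n 0 = 0 :=
  Finset.sum_eq_zero fun i _ => by rw [zero_pow (pow_ne_zero i hp), mul_zero]

theorem addPolyEval_succ (a : ℕ → K) (n : ℕ) (x : K) :
    addPolyEval p a (n + 1) x = addPolyEval p a n x + a (n + 1) * x ^ p ^ (n + 1) :=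
  Finset.sum_range_succ ..

theorem addPolyEval_update_succ (a : ℕ → K) (n : ℕ) (b x : K) :
    addPolyEval p (Function.update a (n + 1) b) (n + 1) x =
      addPolyEval p a n x + b * x ^ p ^ (n + 1) := by
  rw [addPolyEval_succ, Function.update_self]
  congr 1
  refine Finset.sum_congr rfl fun i hi => ?_
  rw [Function.update_of_ne (by simp at hi; omega)]

theorem addPolyEval_succ_of_coeff_zero {a : ℕ → K} (h0 : a 0 = 0) (n : ℕ) (x : K) :
    addPolyEval p a (n + 1) x = addPolyEval p (fun i => a (i + 1)) n (x ^ p) := by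
  rw [addPolyEval, Finset.sum_range_succ', h0, zero_mul, add_zero]
  exact Finset.sum_congr rfl fun i _ => by rw [← pow_mul, ← pow_succ']

theorem eval_addPoly (a : ℕ → K) (n : ℕ) (x : K) :
    (addPoly p a n).eval x = addPolyEval p a n x := by
  simp [addPoly, addPolyEval, eval_finsetSum]

theorem coeff_addPoly_pow (hp : 1 < p) (a : ℕ → K) {n k : ℕ} (hk : k ≤ n) :
    (addPoly p a n).coeff (p ^ k) = a k := by
  have hinj := Nat.pow_right_injective hp
  simp only [addPoly, finsetSum_coeff, coeff_C_mul, coeff_X_pow, hinj.eq_iff, mul_ite, mul_one,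
    mul_zero, Finset.sum_ite_eq, Finset.mem_range]
  rw [if_pos (by omega)]

theorem derivative_addPoly [CharP K p] (a : ℕ → K) (n : ℕ) :
    derivative (addPoly p a n) = C (a 0) := by
  have hcast : ∀ i, ((p ^ (i + 1) : ℕ) : K) = 0 := fun i => by
    rw [Nat.cast_pow, CharP.cast_eq_zero, zero_pow i.succ_ne_zero]
  rw [addPoly, derivative_sum, Finset.sum_range_succ', Finset.sum_eq_zero fun i _ => ?_]
  · simp
  · rw [derivative_C_mul_X_pow, hcast, mul_zero, C_0, zero_mul]

theorem separable_addPoly [CharP K p] {a : ℕ → K} (h0 : a 0 ≠ 0) (n : ℕ) :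
    (addPoly p a n).Separable :=
  ⟨0, C (a 0)⁻¹, by rw [derivative_addPoly, zero_mul, zero_add, ← C_mul, inv_mul_cancel₀ h0, C_1]⟩

theorem exists_ne_zero_addPolyEval_eq_zero [CharP K p] [IsSepClosed K] (hp : 1 < p) {a : ℕ → K}
    {n : ℕ} (hn : n ≠ 0) (h0 : a 0 ≠ 0) (htop : a n ≠ 0) : ∃ α ≠ 0, addPolyEval p a n α = 0 := by
  have hsep := separable_addPoly (p := p) h0 n
  have hcoeff : (addPoly p a n).coeff (p ^ n) ≠ 0 := by rwa [coeff_addPoly_pow hp a le_rfl]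
  have hP : addPoly p a n ≠ 0 := fun h => hcoeff (by rw [h, coeff_zero])
  have hcard : 1 < Fintype.card ((addPoly p a n).rootSet K) := by
    rw [card_rootSet_eq_natDegree hsep (IsSepClosed.splits_codomain _ hsep)]
    exact (Nat.one_lt_pow hn hp).trans_le (le_natDegree_of_ne_zero hcoeff)
  have hroot : ∀ x, x ∈ (addPoly p a n).rootSet K ↔ addPolyEval p a n x = 0 := fun x => by
    rw [mem_rootSet_of_ne hP, coe_aeval_eq_eval, eval_addPoly]
  obtain ⟨⟨α, hα⟩, hne⟩ := Fintype.exists_ne_of_one_lt_card hcard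
    ⟨0, (hroot 0).2 (addPolyEval_zero (by omega) a n)⟩
  exact ⟨α, fun h => hne (Subtype.ext h), (hroot α).1 hα⟩

theorem coeff_eq_of_addPolyEval_eq [Infinite K] (hp : 1 < p) {a b : ℕ → K} {n : ℕ}
    (h : ∀ x, addPolyEval p a n x = addPolyEval p b n x) {k : ℕ} (hk : k ≤ n) : a k = b k := by
  have hab : addPoly p a n = addPoly p b n :=
    Polynomial.funext fun x => by simp only [eval_addPoly, h]
  rw [← coeff_addPoly_pow hp a hk, hab, coeff_addPoly_pow hp b hk]

end AdditivePolynomial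

section Factorization

variable {K : Type*} [Field K] {p : ℕ} [Fact p.Prime] [CharP K p]

theorem lin_pow_char_pow (c e x : K) (j : ℕ) :
    (c * x ^ p - e * x) ^ p ^ j = c ^ p ^ j * x ^ p ^ (j + 1) - e ^ p ^ j * x ^ p ^ j := by
  rw [sub_pow_char_pow, mul_pow, mul_pow, ← pow_mul, ← pow_succ']

theorem exists_addPolyEval_eq_comp_add (β : K) (n : ℕ) (a : ℕ → K) :
    ∃ (q : ℕ → K) (r : K), q n = a (n + 1) ∧
      ∀ x, addPolyEval p a (n + 1) x = addPolyEval p q n (x ^ p - β * x) + r * x := by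
  induction n generalizing a with
  | zero =>
    refine ⟨fun _ => a 1, a 0 + a 1 * β, rfl, fun x => ?_⟩
    simp [addPolyEval, Finset.sum_range_succ]
    ring
  | succ n ih =>
    obtain ⟨q, r, -, hqr⟩ :=
      ih (Function.update a (n + 1) (a (n + 1) + a (n + 2) * β ^ p ^ (n + 1)))
    refine ⟨Function.update q (n + 1) (a (n + 2)), r, Function.update_self .., fun x => ?_⟩
    have hfrob := lin_pow_char_pow (p := p) 1 β x (n + 1)
    rw [one_mul, one_pow, one_mul] at hfrob
    have hx := hqr x
    rw [addPolyEval_update_succ] at hx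
    rw [addPolyEval_update_succ, addPolyEval_succ, addPolyEval_succ]
    linear_combination hx - a (n + 2) * hfrob

theorem exists_addPolyEval_eq_comp_of_root {n : ℕ} {a : ℕ → K} {α : K} (hα : α ≠ 0)
    (hroot : addPolyEval p a (n + 1) α = 0) :
    ∃ q : ℕ → K, q n = a (n + 1) ∧
      ∀ x, addPolyEval p a (n + 1) x = addPolyEval p q n (x ^ p - α ^ (p - 1) * x) := by
  obtain ⟨q, r, hq, hqr⟩ := exists_addPolyEval_eq_comp_add (α ^ (p - 1)) n a
  have hp : p.Prime := Fact.out
  have hα_root : α ^ p - α ^ (p - 1) * α = 0 := by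
    rw [← pow_succ, Nat.sub_add_cancel hp.one_le, sub_self]
  have hr : r = 0 := by
    have h := hqr α
    rw [hroot, hα_root, addPolyEval_zero hp.ne_zero, zero_add] at h
    exact (mul_eq_zero.1 h.symm).resolve_right hα
  exact ⟨q, hq, fun x => by rw [hqr, hr, zero_mul, add_zero]⟩

theorem exists_iterLin2_eq_addPolyEval [IsSepClosed K] {n : ℕ} (hn : 1 ≤ n) :
    ∀ a : ℕ → K, a n ≠ 0 → ∃ L : List (K × K), L.length = n ∧ (∀ ce ∈ L, ce.1 ≠ 0) ∧
      ∀ x, addPolyEval p a n x = iterLin2 p L x := by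
  induction n, hn using Nat.le_induction with
  | base =>
    refine fun a h1 => ⟨[(a 1, -a 0)], rfl, by simpa, fun x => ?_⟩
    simp [addPolyEval, iterLin2, Finset.sum_range_succ]
    ring
  | succ n hn ih =>
    intro a htop
    obtain ⟨β, q, hq, hfac⟩ : ∃ (β : K) (q : ℕ → K), q n = a (n + 1) ∧
        ∀ x, addPolyEval p a (n + 1) x = addPolyEval p q n (x ^ p - β * x) := by
      by_cases h0 : a 0 = 0
      · exact ⟨0, fun i => a (i + 1), rfl, fun x => by
          rw [zero_mul, sub_zero, addPolyEval_succ_of_coeff_zero h0]⟩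
      · obtain ⟨α, hα, hroot⟩ :=
          exists_ne_zero_addPolyEval_eq_zero (Fact.out : p.Prime).one_lt n.succ_ne_zero h0 htop
        exact ⟨_, exists_addPolyEval_eq_comp_of_root hα hroot⟩
    obtain ⟨L, hlen, hc, hL⟩ := ih q (hq ▸ htop)
    refine ⟨(1, β) :: L, by simp [hlen], List.forall_mem_cons.2 ⟨one_ne_zero, hc⟩, fun x => ?_⟩
    simp only [hfac, hL, iterLin2, one_mul]

end Factorization

section Composition

variable {K : Type*} [Field K] (p : ℕ)

def compLinCoeff (c e : K) (q : ℕ → K) : ℕ → K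
  | 0 => -(q 0 * e)
  | k + 1 => q k * c ^ p ^ k - q (k + 1) * e ^ p ^ (k + 1)

def compCoeff : List (K × K) → ℕ → K
  | [] => fun k => if k = 0 then 1 else 0
  | ce :: L => compLinCoeff p ce.1 ce.2 (compCoeff L)

variable {p}

theorem compCoeff_eq_zero_of_length_lt : ∀ {L : List (K × K)} {k : ℕ}, L.length < k →
    compCoeff p L k = 0
  | [], _, hk => if_neg hk.ne'
  | _ :: _, k + 1, hk => by
    simp only [List.length_cons, Nat.add_lt_add_iff_right] at hk
    simp [compCoeff, compLinCoeff, compCoeff_eq_zero_of_length_lt hk,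
      compCoeff_eq_zero_of_length_lt (hk.trans k.lt_succ_self)]

theorem addPolyEval_compLinCoeff [Fact p.Prime] [CharP K p] (c e : K) {q : ℕ → K} {n : ℕ}
    (hq : q (n + 1) = 0) (x : K) :
    addPolyEval p (compLinCoeff p c e q) (n + 1) x = addPolyEval p q n (c * x ^ p - e * x) := by
  have hshift := Finset.sum_range_succ' (fun i => q i * e ^ p ^ i * x ^ p ^ i) (n + 1)
  rw [Finset.sum_range_succ, hq, zero_mul, zero_mul, add_zero] at hshift
  simp only [addPolyEval, lin_pow_char_pow, Finset.sum_range_succ' _ (n + 1), compLinCoeff,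
    sub_mul, mul_sub, Finset.sum_sub_distrib, pow_zero, pow_one] at hshift ⊢
  simp only [← mul_assoc]
  linear_combination hshift

theorem iterLin2_eq_addPolyEval_compCoeff [Fact p.Prime] [CharP K p] :
    ∀ (L : List (K × K)) (x : K), iterLin2 p L x = addPolyEval p (compCoeff p L) L.length x
  | [], x => by simp [iterLin2, addPolyEval, compCoeff]
  | (c, e) :: L, x => by
    change iterLin2 p L (c * x ^ p - e * x) = _
    rw [iterLin2_eq_addPolyEval_compCoeff L, List.length_cons, compCoeff,
      addPolyEval_compLinCoeff _ _ (compCoeff_eq_zero_of_length_lt L.length.lt_succ_self)]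

end Composition

section Valuation

variable {K : Type*} [Field K] {Γ₀ : Type*} [LinearOrderedAddCommMonoidWithTop Γ₀]
  (v : AddValuation K Γ₀) {p : ℕ}

def HasUnitContent (a : ℕ → K) : Prop :=
  (∀ k, 0 ≤ v (a k)) ∧ ∃ k, v (a k) = 0

variable {v}

theorem hasUnitContent_compLinCoeff (hp : p ≠ 0) {q : ℕ → K} (hq : HasUnitContent v q)
    {c e : K} (hce : min (v c) (v e) = 0) : HasUnitContent v (compLinCoeff p c e q) := by
  obtain ⟨hnonneg, hunit⟩ := hq
  have hc : 0 ≤ v c := hce ▸ min_le_left _ _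
  have he : 0 ≤ v e := hce ▸ min_le_right _ _
  have hpow_nonneg : ∀ {y : K} (n : ℕ), 0 ≤ v y → 0 ≤ v (y ^ n) := fun n hy => by
    rw [v.map_pow]; exact nsmul_nonneg hy n
  have hpow_pos : ∀ {y : K} (k : ℕ), 0 < v y → 0 < v (y ^ p ^ k) := fun k hy => by
    rw [v.map_pow]; exact nsmul_pos hy (pow_ne_zero k hp)
  have hpow_zero : ∀ {y : K} (n : ℕ), v y = 0 → v (y ^ n) = 0 := fun n hy => by
    rw [v.map_pow, hy, nsmul_zero]
  classical
  obtain ⟨k, hk, hlt⟩ : ∃ k, v (q k) = 0 ∧ ∀ j < k, 0 < v (q j) :=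
    ⟨Nat.find hunit, Nat.find_spec hunit, fun j hj =>
      (hnonneg j).lt_of_ne (Ne.symm (Nat.find_min hunit hj))⟩
  refine ⟨fun j => ?_, ?_⟩
  · cases j with
    | zero => simpa [compLinCoeff] using add_nonneg (hnonneg 0) he
    | succ j =>
      rw [compLinCoeff]
      refine v.map_le_sub ?_ ?_ <;> rw [v.map_mul]
      exacts [add_nonneg (hnonneg _) (hpow_nonneg _ hc), add_nonneg (hnonneg _) (hpow_nonneg _ he)]
  rcases he.eq_or_lt with he0 | he_pos
  · refine ⟨k, ?_⟩
    cases k with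
    | zero => simp [compLinCoeff, hk, ← he0]
    | succ k =>
      have hlast : v (q (k + 1) * e ^ p ^ (k + 1)) = 0 := by
        rw [v.map_mul, hk, hpow_zero _ he0.symm, add_zero]
      rw [compLinCoeff, v.map_sub_eq_of_lt_right, hlast]
      rw [hlast, v.map_mul]
      exact add_pos_of_pos_of_nonneg (hlt k k.lt_succ_self) (hpow_nonneg _ hc)
  · have hc0 : v c = 0 := by
      rcases min_choice (v c) (v e) with h | h
      · rwa [h] at hce
      · exact absurd (h ▸ hce) he_pos.ne'
    refine ⟨k + 1, ?_⟩
    have hfirst : v (q k * c ^ p ^ k) = 0 := by rw [v.map_mul, hk, hpow_zero _ hc0, add_zero]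
    rw [compLinCoeff, v.map_sub_eq_of_lt_left, hfirst]
    rw [hfirst, v.map_mul]
    exact (hpow_pos _ he_pos).trans_le (le_add_of_nonneg_left (hnonneg _))

theorem hasUnitContent_compCoeff (hp : p ≠ 0) : ∀ {L : List (K × K)},
    (∀ ce ∈ L, min (v ce.1) (v ce.2) = 0) → HasUnitContent v (compCoeff p L)
  | [], _ => ⟨fun k => by by_cases hk : k = 0 <;> simp [compCoeff, hk], 0, by simp [compCoeff]⟩
  | ce :: _, hL =>
    hasUnitContent_compLinCoeff hp (hasUnitContent_compCoeff hp (List.forall_mem_cons.1 hL).2)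
      (List.forall_mem_cons.1 hL).1

theorem val_eq_zero_of_coeff_eq_mul [Nontrivial Γ₀] {a b : ℕ → K} {t : K} {n : ℕ}
    (hb : HasUnitContent v b) (hb_zero : ∀ k, n < k → b k = 0) (ha : ∀ i ≤ n, 0 ≤ v (a i))
    (ha_unit : ∃ i ≤ n, v (a i) = 0) (hab : ∀ k ≤ n, b k = t * a k) : v t = 0 := by
  obtain ⟨k, hk⟩ := hb.2
  have hkn : k ≤ n := by
    by_contra hlt
    rw [hb_zero k (by omega), v.map_zero] at hk
    exact v.ne_top_iff.2 one_ne_zero (v.map_one.trans hk.symm)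
  have hle : v t ≤ 0 := by
    rw [hab k hkn, v.map_mul] at hk
    exact hk ▸ le_add_of_nonneg_right (ha k hkn)
  obtain ⟨i, hi, hai⟩ := ha_unit
  have hge : 0 ≤ v t := by
    simpa [hab i hi, v.map_mul, hai] using hb.1 i
  exact le_antisymm hle hge

theorem exists_min_val_mul_eq_zero {c : K} (e : K) (hc : c ≠ 0) :
    ∃ s ≠ 0, min (v (s * c)) (v (s * e)) = 0 := by
  have key : ∀ {x y : K}, x ≠ 0 → v x ≤ v y → min (v (x⁻¹ * x)) (v (x⁻¹ * y)) = 0 := by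
    intro x y hx hxy
    rw [inv_mul_cancel₀ hx, v.map_one, min_eq_left]
    rw [← v.map_one, ← inv_mul_cancel₀ hx, v.map_mul, v.map_mul]
    exact add_le_add le_rfl hxy
  rcases le_or_gt (v c) (v e) with h | h
  · exact ⟨c⁻¹, inv_ne_zero hc, key hc h⟩
  · have he : e ≠ 0 := by
      rintro rfl
      exact not_top_lt (v.map_zero ▸ h)
    exact ⟨e⁻¹, inv_ne_zero he, min_comm (v (e⁻¹ * c)) _ ▸ key he h.le⟩

theorem exists_normalized_iterLin2 : ∀ (L : List (K × K)), (∀ ce ∈ L, ce.1 ≠ 0) →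
    ∀ μ : K, μ ≠ 0 → ∃ (L' : List (K × K)) (t : K), t ≠ 0 ∧ L'.length = L.length ∧
      (∀ ce ∈ L', min (v ce.1) (v ce.2) = 0) ∧ ∀ x, iterLin2 p L' (μ * x) = t * iterLin2 p L x
  | [], _, μ, hμ => ⟨[], μ, hμ, rfl, by simp, fun _ => rfl⟩
  | (c, e) :: L, hL, μ, hμ => by
    have hc : c * μ⁻¹ ^ p ≠ 0 :=
      mul_ne_zero (hL _ List.mem_cons_self) (pow_ne_zero p (inv_ne_zero hμ))
    obtain ⟨s, hs, hmin⟩ := exists_min_val_mul_eq_zero (v := v) (e * μ⁻¹) hc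
    obtain ⟨L', t, ht, hlen, hL', heq⟩ :=
      exists_normalized_iterLin2 L (List.forall_mem_cons.1 hL).2 s hs
    refine ⟨(s * (c * μ⁻¹ ^ p), s * (e * μ⁻¹)) :: L', t, ht, by simp [hlen],
      List.forall_mem_cons.2 ⟨hmin, hL'⟩, fun x => ?_⟩
    have hscale : s * (c * μ⁻¹ ^ p) * (μ * x) ^ p - s * (e * μ⁻¹) * (μ * x) =
        s * (c * x ^ p - e * x) := by
      rw [mul_pow μ, inv_pow]
      field_simp
    change iterLin2 p L' (s * (c * μ⁻¹ ^ p) * (μ * x) ^ p - s * (e * μ⁻¹) * (μ * x)) =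
      t * iterLin2 p L (c * x ^ p - e * x)
    rw [hscale, heq]

theorem exists_iterLin2_eq_mul {t : K} (ht : v t = 0) : ∀ L : List (K × K), L ≠ [] →
    (∀ ce ∈ L, min (v ce.1) (v ce.2) = 0) → ∃ L' : List (K × K), L'.length = L.length ∧
      (∀ ce ∈ L', min (v ce.1) (v ce.2) = 0) ∧ ∀ x, iterLin2 p L' x = t * iterLin2 p L x
  | [(c, e)], _, hL => ⟨[(t * c, t * e)], rfl, by simpa [v.map_mul, ht] using hL, fun x => by
      simp only [iterLin2, id]; ring⟩
  | ce :: ce' :: L, _, hL => by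
    obtain ⟨L', hlen, hL', heq⟩ :=
      exists_iterLin2_eq_mul ht (ce' :: L) (List.cons_ne_nil _ _) (List.forall_mem_cons.1 hL).2
    exact ⟨ce :: L', by simp [hlen], List.forall_mem_cons.2 ⟨(List.forall_mem_cons.1 hL).1, hL'⟩,
      fun x => heq _⟩

end Valuation

/-- Let `(K, v)` be a separably closed valued field of characteristic
`p > 0` with valuation ring `O`. Given `a_0, …, a_d ∈ O` with `a_d ≠ 0` and at least
one `a_i` a unit, there are `c_j, e_j ∈ O` with `min(v c_j, v e_j) = 0` such that
`∑ a_i·x^{p^i} = (L_d ∘ ⋯ ∘ L_1)(x)` where `L_j(y) = c_j·y^p − e_j·y`. -/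
theorem stmt_4 (p : ℕ) (hp : p.Prime) (K : Type*) [Field K] [CharP K p] [IsSepClosed K]
    (Γ : Type*) [AddCommGroup Γ] [LinearOrder Γ] [IsOrderedAddMonoid Γ] (vf : ValuedFieldAux K Γ)
    (d : ℕ) (hd : 1 ≤ d) (a : ℕ → K)
    (ha : ∀ i ≤ d, 0 ≤ vf.v (a i)) (had : a d ≠ 0)
    (haunit : ∃ i ≤ d, vf.v (a i) = 0) :
    ∃ L : List (K × K), L.length = d ∧
      (∀ ce ∈ L, 0 ≤ vf.v ce.1 ∧ 0 ≤ vf.v ce.2 ∧ min (vf.v ce.1) (vf.v ce.2) = 0) ∧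
      ∀ x : K, ∑ i ∈ Finset.range (d + 1), a i * x ^ (p ^ i) = iterLin2 p L x := by
  have : Fact p.Prime := ⟨hp⟩
  have := IsSepClosed.infinite K
  let v := vf.toAddValuation
  obtain ⟨L₀, hlen₀, hc₀, hf₀⟩ := exists_iterLin2_eq_addPolyEval hd a had
  obtain ⟨L₁, t, ht, hlen₁, hnorm₁, hf₁⟩ :=
    exists_normalized_iterLin2 (v := v) L₀ hc₀ 1 one_ne_zero
  have hscale (x : K) : iterLin2 p L₁ x = t * addPolyEval p a d x := by
    rw [hf₀, ← hf₁, one_mul]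
  have hcoeff : ∀ k ≤ d, compCoeff p L₁ k = t * a k := fun k hk =>
    coeff_eq_of_addPolyEval_eq (b := fun i => t * a i) hp.one_lt (fun x => by
      rw [← hlen₀, ← hlen₁, ← iterLin2_eq_addPolyEval_compCoeff, hscale, hlen₁, hlen₀]
      simp only [addPolyEval, Finset.mul_sum, mul_assoc]) hk
  have hvt : v t = 0 := val_eq_zero_of_coeff_eq_mul (v := v)
    (hasUnitContent_compCoeff hp.ne_zero hnorm₁)
    (fun k hk => compCoeff_eq_zero_of_length_lt (by omega)) ha haunit hcoeff
  obtain ⟨L, hlen, hnorm, hL⟩ := exists_iterLin2_eq_mul (v := v) (p := p) (t := t⁻¹)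
    (by rw [v.map_inv, hvt, neg_zero]) L₁ (List.ne_nil_of_length_pos (by omega)) hnorm₁
  refine ⟨L, by omega, fun ce hce => ?_, fun x => ?_⟩
  · have h := hnorm ce hce
    exact ⟨h ▸ min_le_left _ _, h ▸ min_le_right _ _, h⟩
  · rw [hL, hscale, inv_mul_cancel_left₀ ht, addPolyEval]
end
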